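/- Every maximal clique of the parallelism relation ∥ (k₁ ∥ k₂ iff ∅ ≠ k₁ ∩ k₂ ⊆ W) on proper lines is of exactly one of two disjoint types: either a star direction (all lines of the clique pass through a common improper point) or a top direction (all lines of the clique are contained in a common proper plane). -/

import Mathlib

/-- A projective space of dimension at least 3, given by its point set `S` and its
set of lines: any two points lie on a unique line, the Veblen (Pasch) axiom holds,
and there exist two disjoint lines (dimension ≥ 3). -/
structure ProjSpace (S : Type*) where
  L : Set (Set S)
  two_points : ∀ k ∈ L, ∃ a ∈ k, ∃ b ∈ k, a ≠ b
  unique_meet : ∀ k ∈ L, ∀ l ∈ L, k ≠ l → (k ∩ l).Subsingleton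
  join : ∀ a b : S, a ≠ b → ∃ k ∈ L, a ∈ k ∧ b ∈ k
  veblen : ∀ l₁ ∈ L, ∀ l₂ ∈ L, ∀ l₃ ∈ L, ∀ l₄ ∈ L, ∀ p a b c d : S,
    l₁ ≠ l₂ → p ≠ a → p ≠ b → p ≠ c → p ≠ d →
    p ∈ l₁ → a ∈ l₁ → c ∈ l₁ → p ∈ l₂ → b ∈ l₂ → d ∈ l₂ →
    a ∈ l₃ → b ∈ l₃ → c ∈ l₄ → d ∈ l₄ → (l₃ ∩ l₄).Nonempty
  dim3 : ∃ k ∈ L, ∃ l ∈ L, k ∩ l = ∅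

namespace ProjSpace

variable {S : Type*}

/-- A subspace: any line through two of its points is contained in it. -/
def IsSubspace (P : ProjSpace S) (X : Set S) : Prop :=
  ∀ k ∈ P.L, ∀ a ∈ k, ∀ b ∈ k, a ≠ b → a ∈ X → b ∈ X → k ⊆ X

/-- The subspace spanned by a point set. -/
def span (P : ProjSpace S) (X : Set S) : Set S :=
  ⋂₀ {Y | P.IsSubspace Y ∧ X ⊆ Y}

/-- A plane: the span of a line together with a point outside it. -/
def IsPlane (P : ProjSpace S) (Pl : Set S) : Prop :=
  ∃ k ∈ P.L, ∃ a, a ∉ k ∧ Pl = P.span (insert a k)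

/-- `HasIndex P W lam`: some line has exactly `lam` points in `W` and every line not
contained in `W` has at most `lam` points in `W`. -/
def HasIndex (P : ProjSpace S) (W : Set S) (lam : ℕ) : Prop :=
  (∃ k ∈ P.L, (k ∩ W).encard = (lam : ℕ∞)) ∧
    ∀ k ∈ P.L, ¬ k ⊆ W → (k ∩ W).encard ≤ (lam : ℕ∞)

/-- Three lines form a triangle: pairwise distinct, pairwise intersecting,
not concurrent. -/
def LineTriangle (P : ProjSpace S) (k₁ k₂ k₃ : Set S) : Prop :=
  k₁ ∈ P.L ∧ k₂ ∈ P.L ∧ k₃ ∈ P.L ∧ k₁ ≠ k₂ ∧ k₁ ≠ k₃ ∧ k₂ ≠ k₃ ∧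
    (k₁ ∩ k₂).Nonempty ∧ (k₁ ∩ k₃).Nonempty ∧ (k₂ ∩ k₃).Nonempty ∧
    ¬ (k₁ ∩ k₂ ∩ k₃).Nonempty

/-- Parallelism w.r.t. the horizon `W`: the lines meet, and only inside `W`. -/
def Par (W : Set S) (k₁ k₂ : Set S) : Prop :=
  (k₁ ∩ k₂).Nonempty ∧ k₁ ∩ k₂ ⊆ W

end ProjSpace

namespace ProjSpace

variable {S : Type*}

/-- A clique of the parallelism relation: a set of proper lines that are pairwise
parallel. -/
def IsParClique (P : ProjSpace S) (W : Set S) (C : Set (Set S)) : Prop :=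
  C ⊆ P.L ∧ (∀ k ∈ C, ¬ k ⊆ W) ∧ ∀ k ∈ C, ∀ l ∈ C, k ≠ l → Par W k l

/-- A maximal clique of the parallelism relation. -/
def IsMaxParClique (P : ProjSpace S) (W : Set S) (C : Set (Set S)) : Prop :=
  IsParClique P W C ∧ ∀ C', IsParClique P W C' → C ⊆ C' → C' = C

/-- A star direction: all lines of the clique pass through a common improper point. -/
def IsStarDirection (P : ProjSpace S) (W : Set S) (C : Set (Set S)) : Prop :=
  IsMaxParClique P W C ∧ ∃ a ∈ W, ∀ k ∈ C, a ∈ k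

/-- A top direction: all lines of the clique are contained in a common proper plane. -/
def IsTopDirection (P : ProjSpace S) (W : Set S) (C : Set (Set S)) : Prop :=
  IsMaxParClique P W C ∧ ∃ Pl : Set S, P.IsPlane Pl ∧ ¬ Pl ⊆ W ∧ ∀ k ∈ C, k ⊆ Pl

end ProjSpace

/-!
If every line of `C` passes through a point `a ∈ W`, maximality puts every proper line through
`a` into `C`. A line through a proper point of a plane and a point off it has at least `λ + 2`
points, only one in the plane and at most `λ` in `W`, so some proper point `q` lies off the plane,
and the proper line `aq` of `C` leaves the plane.

Otherwise the lines of `C` meet pairwise without being concurrent (two lines of `C` meet only in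
`W`), and such lines are coplanar: three of them, `k, l, m`, lie in the plane spanned by `k` and
`l ∩ m`, and every further line meets them in two distinct points. Planes are cones over a line,
and by Veblen's axiom any two lines of a cone meet, so by `dim3` no plane is the whole space.
-/

namespace ProjSpace

variable {S : Type*} {P : ProjSpace S} {k l m g h : Set S} {a p u v x y : S}

theorem eq_of_mem_of_mem (hk : k ∈ P.L) (hl : l ∈ P.L) (huv : u ≠ v) (huk : u ∈ k)
    (hul : u ∈ l) (hvk : v ∈ k) (hvl : v ∈ l) : k = l := by
  by_contra hkl
  exact huv (P.unique_meet k hk l hl hkl ⟨huk, hul⟩ ⟨hvk, hvl⟩)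

theorem exists_mem_ne (hk : k ∈ P.L) (x : S) : ∃ u ∈ k, u ≠ x := by
  obtain ⟨u, hu, v, hv, huv⟩ := P.two_points k hk
  by_cases hux : u = x
  · exact ⟨v, hv, fun hvx => huv (hux.trans hvx.symm)⟩
  · exact ⟨u, hu, hux⟩

theorem exists_notMem_line (hk : k ∈ P.L) : ∃ b, b ∉ k := by
  by_contra! hall
  obtain ⟨m₁, hm₁, m₂, hm₂, hdisj⟩ := P.dim3
  have eq_k : ∀ m ∈ P.L, m = k := fun m hm => by
    obtain ⟨u, hu, v, hv, huv⟩ := P.two_points m hm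
    exact eq_of_mem_of_mem hm hk huv hu (hall u) hv (hall v)
  obtain ⟨u, hu, -⟩ := P.two_points k hk
  have hu₁₂ : u ∈ m₁ ∩ m₂ := by rw [eq_k m₁ hm₁, eq_k m₂ hm₂]; exact ⟨hu, hu⟩
  simp [hdisj] at hu₁₂

theorem span_isSubspace (X : Set S) : P.IsSubspace (P.span X) :=
  fun g hg u hug v hvg huv huX hvX _ hxg Y hY =>
    hY.1 g hg u hug v hvg huv (huX Y hY) (hvX Y hY) hxg

theorem subset_span (X : Set S) : X ⊆ P.span X := fun _ hx _ hY => hY.2 hx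

theorem IsSubspace.subset_of_inter_nonempty {X : Set S} (hX : P.IsSubspace X) (hn : h ∈ P.L)
    (hk : k ⊆ X) (hl : l ⊆ X) (hm : m ⊆ X) (hklm : ¬ (k ∩ l ∩ m).Nonempty)
    (h₁ : (h ∩ k).Nonempty) (h₂ : (h ∩ l).Nonempty) (h₃ : (h ∩ m).Nonempty) : h ⊆ X := by
  obtain ⟨x₁, hx₁h, hx₁k⟩ := h₁
  obtain ⟨x₂, hx₂h, hx₂l⟩ := h₂
  obtain ⟨x₃, hx₃h, hx₃m⟩ := h₃
  by_cases h₁₂ : x₁ = x₂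
  · by_cases h₁₃ : x₁ = x₃
    · exact absurd ⟨x₁, ⟨hx₁k, h₁₂ ▸ hx₂l⟩, h₁₃ ▸ hx₃m⟩ hklm
    · exact hX h hn x₁ hx₁h x₃ hx₃h h₁₃ (hk hx₁k) (hm hx₃m)
  · exact hX h hn x₁ hx₁h x₂ hx₂h h₁₂ (hk hx₁k) (hl hx₂l)

def cone (P : ProjSpace S) (a : S) (k : Set S) : Set S :=
  {x | x = a ∨ ∃ p ∈ k, ∃ l ∈ P.L, a ∈ l ∧ p ∈ l ∧ x ∈ l}

theorem apex_mem_cone : a ∈ P.cone a k := Or.inl rfl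

theorem line_subset_cone (hp : p ∈ k) (hl : l ∈ P.L) (hal : a ∈ l) (hpl : p ∈ l) :
    l ⊆ P.cone a k :=
  fun _ hx => Or.inr ⟨p, hp, l, hl, hal, hpl, hx⟩

theorem subset_cone (ha : a ∉ k) : k ⊆ P.cone a k := by
  intro p hp
  obtain ⟨l, hl, hal, hpl⟩ := P.join a p (by rintro rfl; exact ha hp)
  exact line_subset_cone hp hl hal hpl hpl

theorem inter_nonempty_of_mem_cone (hk : k ∈ P.L) (ha : a ∉ k) (hg : g ∈ P.L) (hag : a ∉ g)
    (huv : u ≠ v) (hug : u ∈ g) (hvg : v ∈ g) (hu : u ∈ P.cone a k) (hv : v ∈ P.cone a k) :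
    (g ∩ k).Nonempty := by
  by_cases huk : u ∈ k
  · exact ⟨u, hug, huk⟩
  by_cases hvk : v ∈ k
  · exact ⟨v, hvg, hvk⟩
  have hua : u ≠ a := by rintro rfl; exact hag hug
  have hva : v ≠ a := by rintro rfl; exact hag hvg
  obtain ⟨p, hp, lu, hlu, halu, hplu, hulu⟩ := hu.resolve_left hua
  obtain ⟨q, hq, lv, hlv, halv, hqlv, hvlv⟩ := hv.resolve_left hva
  have hlulv : lu ≠ lv := by
    rintro rfl
    exact hag (eq_of_mem_of_mem hg hlu huv hug hulu hvg hvlv ▸ halu)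
  exact P.veblen lu hlu lv hlv g hg k hk a u v p q hlulv hua.symm hva.symm
    (by rintro rfl; exact ha hp) (by rintro rfl; exact ha hq)
    halu hulu hplu halv hvlv hqlv hug hvg hp hq

/-- Veblen's axiom for the lines `au` and `g` through `u`, with transversals `ax` and `k`. -/
theorem mem_cone_of_mem_line (hk : k ∈ P.L) (ha : a ∉ k) (hg : g ∈ P.L) (hag : a ∉ g)
    (hug : u ∈ g) (hu : u ∈ P.cone a k) (huk : u ∉ k) (hpg : p ∈ g) (hpk : p ∈ k)
    (hxg : x ∈ g) : x ∈ P.cone a k := by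
  by_cases hxu : x = u
  · exact hxu ▸ hu
  by_cases hxk : x ∈ k
  · exact subset_cone ha hxk
  have hua : u ≠ a := by rintro rfl; exact hag hug
  obtain ⟨q, hq, lu, hlu, halu, hqlu, hulu⟩ := hu.resolve_left hua
  obtain ⟨lx, hlx, halx, hxlx⟩ := P.join a x (by rintro rfl; exact hag hxg)
  obtain ⟨t, htlx, htk⟩ := P.veblen lu hlu g hg lx hlx k hk u a x q p
    (by rintro rfl; exact hag halu) hua (Ne.symm hxu) (by rintro rfl; exact huk hq)
    (by rintro rfl; exact huk hpk) hulu halu hqlu hug hxg hpg halx hxlx hq hpk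
  exact line_subset_cone htk hlx halx htlx hxlx

theorem cone_isSubspace (hk : k ∈ P.L) (ha : a ∉ k) : P.IsSubspace (P.cone a k) := by
  intro g hg u hug v hvg huv hu hv
  by_cases hag : a ∈ g
  · obtain ⟨w, hwg, hw, hwa⟩ : ∃ w ∈ g, w ∈ P.cone a k ∧ w ≠ a := by
      rcases eq_or_ne u a with rfl | hua
      exacts [⟨v, hvg, hv, huv.symm⟩, ⟨u, hug, hu, hua⟩]
    obtain ⟨p, hp, l, hl, hal, hpl, hwl⟩ := hw.resolve_left hwa
    rw [eq_of_mem_of_mem hg hl hwa hwg hwl hag hal]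
    exact line_subset_cone hp hl hal hpl
  by_cases hgk : g = k
  · rw [hgk]
    exact subset_cone ha
  obtain ⟨w, hwg, hw, hwk⟩ : ∃ w ∈ g, w ∈ P.cone a k ∧ w ∉ k := by
    by_cases huk : u ∈ k
    · by_cases hvk : v ∈ k
      · exact absurd (eq_of_mem_of_mem hg hk huv hug huk hvg hvk) hgk
      · exact ⟨v, hvg, hv, hvk⟩
    · exact ⟨u, hug, hu, huk⟩
  obtain ⟨s, hsg, hsk⟩ := inter_nonempty_of_mem_cone hk ha hg hag huv hug hvg hu hv
  exact fun x hxg => mem_cone_of_mem_line hk ha hg hag hwg hw hwk hsg hsk hxg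

theorem span_insert_eq_cone (hk : k ∈ P.L) (ha : a ∉ k) :
    P.span (insert a k) = P.cone a k := by
  apply subset_antisymm
  · exact Set.sInter_subset_of_mem
      ⟨cone_isSubspace hk ha, Set.insert_subset apex_mem_cone (subset_cone ha)⟩
  · rintro x (rfl | ⟨p, hp, l, hl, hal, hpl, hxl⟩) Y ⟨hY, haY⟩
    · exact haY (Set.mem_insert _ _)
    · exact hY l hl a hal p hpl (by rintro rfl; exact ha hp)
        (haY (Set.mem_insert _ _)) (haY (Set.mem_insert_of_mem _ hp)) hxl

theorem inter_nonempty_of_subset_cone (hk : k ∈ P.L) (ha : a ∉ k) (hg : g ∈ P.L)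
    (hgc : g ⊆ P.cone a k) : (g ∩ k).Nonempty := by
  by_cases hag : a ∈ g
  · obtain ⟨w, hwg, hwa⟩ := exists_mem_ne hg a
    obtain ⟨p, hp, l, hl, hal, hpl, hwl⟩ := (hgc hwg).resolve_left hwa
    rw [eq_of_mem_of_mem hg hl hwa hwg hwl hag hal]
    exact ⟨p, hpl, hp⟩
  · obtain ⟨u, hug, v, hvg, huv⟩ := P.two_points g hg
    exact inter_nonempty_of_mem_cone hk ha hg hag huv hug hvg (hgc hug) (hgc hvg)

/-- Both lines meet `k`, say in `s ≠ t`; a line `r u w` joining further points `u ∈ g`, `w ∈ h`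
meets `k` in `r`, and Veblen's axiom applied at `r` makes `g = us` and `h = wt` meet. -/
theorem inter_nonempty_of_subset_cone_of_subset_cone (hk : k ∈ P.L) (ha : a ∉ k) (hg : g ∈ P.L)
    (hh : h ∈ P.L) (hgc : g ⊆ P.cone a k) (hhc : h ⊆ P.cone a k) : (g ∩ h).Nonempty := by
  obtain ⟨s, hsg, hsk⟩ := inter_nonempty_of_subset_cone hk ha hg hgc
  obtain ⟨t, hth, htk⟩ := inter_nonempty_of_subset_cone hk ha hh hhc
  by_cases hgk : g = k
  · exact ⟨t, hgk ▸ htk, hth⟩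
  by_cases hhk : h = k
  · exact ⟨s, hsg, hhk ▸ hsk⟩
  obtain ⟨u, hug, hus⟩ := exists_mem_ne hg s
  obtain ⟨w, hwh, hwt⟩ := exists_mem_ne hh t
  have huk : u ∉ k := fun huk => hgk (eq_of_mem_of_mem hg hk hus hug huk hsg hsk)
  have hwk : w ∉ k := fun hwk => hhk (eq_of_mem_of_mem hh hk hwt hwh hwk hth htk)
  by_cases huw : u = w
  · exact ⟨u, hug, huw ▸ hwh⟩
  obtain ⟨l, hl, hul, hwl⟩ := P.join u w huw
  obtain ⟨r, hrl, hrk⟩ := inter_nonempty_of_subset_cone hk ha hl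
    (cone_isSubspace hk ha l hl u hul w hwl huw (hgc hug) (hhc hwh))
  by_cases hrs : r = s
  · subst hrs
    exact ⟨w, eq_of_mem_of_mem hl hg hus hul hug hrl hsg ▸ hwl, hwh⟩
  by_cases hrt : r = t
  · subst hrt
    exact ⟨u, hug, eq_of_mem_of_mem hl hh hwt hwl hwh hrl hth ▸ hul⟩
  exact P.veblen l hl k hk g hg h hh r u s w t (by rintro rfl; exact huk hul)
    (by rintro rfl; exact huk hrk) hrs (by rintro rfl; exact hwk hrk) hrt
    hrl hul hwl hrk hsk htk hug hsg hwh hth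

theorem IsPlane.isSubspace {Pl : Set S} (hPl : P.IsPlane Pl) : P.IsSubspace Pl := by
  obtain ⟨k, -, a, -, rfl⟩ := hPl
  exact span_isSubspace _

theorem IsPlane.exists_notMem {Pl : Set S} (hPl : P.IsPlane Pl) : ∃ y, y ∉ Pl := by
  obtain ⟨k, hk, a, ha, rfl⟩ := hPl
  rw [span_insert_eq_cone hk ha]
  by_contra! hall
  obtain ⟨m₁, hm₁, m₂, hm₂, hdisj⟩ := P.dim3
  simpa [hdisj] using
    inter_nonempty_of_subset_cone_of_subset_cone hk ha hm₁ hm₂ (fun x _ => hall x) (fun x _ => hall x)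

theorem exists_plane_of_inter_nonempty {F : Set (Set S)} (hF : F ⊆ P.L)
    (hmeet : ∀ k ∈ F, ∀ l ∈ F, (k ∩ l).Nonempty) (hk : k ∈ F) (hl : l ∈ F) (hkl : k ≠ l)
    (hnc : ¬ ∃ p, ∀ n ∈ F, p ∈ n) : ∃ Pl, P.IsPlane Pl ∧ ∀ n ∈ F, n ⊆ Pl := by
  obtain ⟨p, hpk, hpl⟩ := hmeet k hk l hl
  obtain ⟨m, hm, hpm⟩ : ∃ m ∈ F, p ∉ m := by
    by_contra! hall
    exact hnc ⟨p, hall⟩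
  have hunique : ∀ x ∈ k, x ∈ l → x = p := fun x hxk hxl =>
    P.unique_meet k (hF hk) l (hF hl) hkl ⟨hxk, hxl⟩ ⟨hpk, hpl⟩
  obtain ⟨c, hcl, hcm⟩ := hmeet l hl m hm
  have hck : c ∉ k := fun hck => hpm (hunique c hck hcl ▸ hcm)
  set Pl := P.span (insert c k)
  have hPl : P.IsSubspace Pl := span_isSubspace _
  have hkPl : k ⊆ Pl := (Set.subset_insert c k).trans (subset_span _)
  have hcPl : c ∈ Pl := subset_span _ (Set.mem_insert c k)
  have hlPl : l ⊆ Pl :=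
    hPl l (hF hl) p hpl c hcl (by rintro rfl; exact hck hpk) (hkPl hpk) hcPl
  obtain ⟨q, hqk, hqm⟩ := hmeet k hk m hm
  have hmPl : m ⊆ Pl :=
    hPl m (hF hm) q hqm c hcm (by rintro rfl; exact hck hqk) (hkPl hqk) hcPl
  have hklm : ¬ (k ∩ l ∩ m).Nonempty := fun ⟨x, ⟨hxk, hxl⟩, hxm⟩ =>
    hpm (hunique x hxk hxl ▸ hxm)
  exact ⟨Pl, ⟨k, hF hk, c, hck, rfl⟩, fun n hn => hPl.subset_of_inter_nonempty (hF hn)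
    hkPl hlPl hmPl hklm (hmeet n hn k hk) (hmeet n hn l hl) (hmeet n hn m hm)⟩

theorem IsSubspace.exists_notMem_of_notMem {X W : Set S} {lam : ℕ} (hX : P.IsSubspace X)
    (hbound : ∀ k ∈ P.L, ¬ k ⊆ W → (k ∩ W).encard ≤ lam)
    (hsize : ∀ k ∈ P.L, (lam : ℕ∞) + 2 ≤ k.encard) (hxX : x ∈ X) (hxW : x ∉ W)
    (hyX : y ∉ X) : ∃ q, q ∉ X ∧ q ∉ W := by
  by_contra! hcc
  obtain ⟨g, hg, hxg, hyg⟩ := P.join x y (by rintro rfl; exact hyX hxX)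
  have hsub : g \ {x} ⊆ g ∩ W := fun z ⟨hzg, hzx⟩ =>
    ⟨hzg, hcc z fun hzX => hyX (hX g hg z hzg x hxg hzx hzX hxX hyg)⟩
  have hlt : (lam : ℕ∞) + 2 ≤ lam + 1 := calc
    (lam : ℕ∞) + 2 ≤ g.encard := hsize g hg
    _ = (g \ {x}).encard + 1 := (Set.encard_sdiff_singleton_add_one hxg).symm
    _ ≤ (g ∩ W).encard + 1 := by gcongr
    _ ≤ lam + 1 := by gcongr; exact hbound g hg fun hgW => hxW (hgW hxg)
  norm_cast at hlt
  omega

variable {W : Set S} {C : Set (Set S)}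

theorem IsParClique.inter_nonempty (hC : IsParClique P W C) (hk : k ∈ C) (hl : l ∈ C) :
    (k ∩ l).Nonempty := by
  by_cases hkl : k = l
  · obtain ⟨u, hu, -⟩ := P.two_points k (hC.1 hk)
    exact ⟨u, hu, hkl ▸ hu⟩
  · exact (hC.2.2 k hk l hl hkl).1

theorem IsParClique.exists_plane (hC : IsParClique P W C) (hne : C.Nonempty)
    (hstar : ¬ ∃ a ∈ W, ∀ k ∈ C, a ∈ k) : ∃ Pl, P.IsPlane Pl ∧ ∀ k ∈ C, k ⊆ Pl := by
  obtain ⟨k, hk⟩ := hne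
  by_cases hsingle : ∀ l ∈ C, l = k
  · obtain ⟨b, hb⟩ := exists_notMem_line (hC.1 hk)
    exact ⟨P.span (insert b k), ⟨k, hC.1 hk, b, hb, rfl⟩,
      fun l hl => hsingle l hl ▸ (Set.subset_insert b k).trans (subset_span _)⟩
  push Not at hsingle
  obtain ⟨l, hl, hlk⟩ := hsingle
  refine exists_plane_of_inter_nonempty hC.1 (fun _ h₁ _ h₂ => hC.inter_nonempty h₁ h₂)
    hk hl hlk.symm ?_
  rintro ⟨p, hp⟩
  exact hstar ⟨p, (hC.2.2 k hk l hl hlk.symm).2 ⟨hp k hk, hp l hl⟩, hp⟩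

theorem IsMaxParClique.nonempty (hC : IsMaxParClique P W C) (hk : k ∈ P.L) (hkW : ¬ k ⊆ W) :
    C.Nonempty := by
  by_contra hC₀
  rw [Set.not_nonempty_iff_eq_empty] at hC₀
  subst hC₀
  have hclique : IsParClique P W {k} :=
    ⟨Set.singleton_subset_iff.2 hk, by rintro _ rfl; exact hkW,
      by rintro _ rfl _ rfl hkk; exact absurd rfl hkk⟩
  exact Set.singleton_ne_empty k (hC.2 {k} hclique (Set.empty_subset _))

theorem IsMaxParClique.mem_of_forall_mem (hC : IsMaxParClique P W C) (haW : a ∈ W)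
    (haC : ∀ k ∈ C, a ∈ k) (hl : l ∈ P.L) (hal : a ∈ l) (hlW : ¬ l ⊆ W) : l ∈ C := by
  have ha : ∀ k ∈ insert l C, a ∈ k := by
    rintro k (rfl | hk)
    exacts [hal, haC k hk]
  have hclique : IsParClique P W (insert l C) := by
    refine ⟨Set.insert_subset hl hC.1.1, ?_, fun k hk k' hk' hkk' => ?_⟩
    · rintro k (rfl | hk)
      exacts [hlW, hC.1.2.1 k hk]
    have hkL := Set.insert_subset hl hC.1.1 hk
    have hk'L := Set.insert_subset hl hC.1.1 hk'
    refine ⟨⟨a, ha k hk, ha k' hk'⟩, fun x hx => ?_⟩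
    rw [P.unique_meet k hkL k' hk'L hkk' hx ⟨ha k hk, ha k' hk'⟩]
    exact haW
  rw [← hC.2 _ hclique (Set.subset_insert l C)]
  exact Set.mem_insert l C

theorem IsMaxParClique.not_forall_subset_plane {lam : ℕ} (hC : IsMaxParClique P W C)
    (hbound : ∀ k ∈ P.L, ¬ k ⊆ W → (k ∩ W).encard ≤ lam)
    (hsize : ∀ k ∈ P.L, (lam : ℕ∞) + 2 ≤ k.encard) (hne : C.Nonempty) (haW : a ∈ W)
    (haC : ∀ k ∈ C, a ∈ k) {Pl : Set S} (hPl : P.IsPlane Pl) : ¬ ∀ k ∈ C, k ⊆ Pl := by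
  intro hCPl
  obtain ⟨k, hk⟩ := hne
  obtain ⟨x, hxk, hxW⟩ := Set.not_subset.1 (hC.1.2.1 k hk)
  obtain ⟨y, hy⟩ := hPl.exists_notMem
  obtain ⟨q, hqPl, hqW⟩ :=
    hPl.isSubspace.exists_notMem_of_notMem hbound hsize (hCPl k hk hxk) hxW hy
  obtain ⟨g, hg, hag, hqg⟩ := P.join a q (by rintro rfl; exact hqW haW)
  exact hqPl (hCPl g (hC.mem_of_forall_mem haW haC hg hag fun hgW => hqW (hgW hqg)) hqg)

end ProjSpace

open ProjSpace in
theorem max_par_clique_dichotomy_general {S : Type*} (P : ProjSpace S) (W : Set S)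
    (lam : ℕ) (hind : P.HasIndex W lam)
    (hsize : ∀ k ∈ P.L, 2 * (lam : ℕ∞) + 2 ≤ k.encard)
    (C : Set (Set S)) (hC : IsMaxParClique P W C) :
    Xor' (∃ a ∈ W, ∀ k ∈ C, a ∈ k)
         (∃ Pl : Set S, P.IsPlane Pl ∧ ¬ Pl ⊆ W ∧ ∀ k ∈ C, k ⊆ Pl) := by
  have hsize' : ∀ k ∈ P.L, (lam : ℕ∞) + 2 ≤ k.encard :=
    fun k hk => le_trans (by norm_cast; omega) (hsize k hk)
  obtain ⟨k₀, hk₀, hk₀W⟩ : ∃ k ∈ P.L, ¬ k ⊆ W := by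
    obtain ⟨k, hk, hcard⟩ := hind.1
    refine ⟨k, hk, fun hkW => ?_⟩
    have hlt := hsize' k hk
    rw [← Set.inter_eq_left.2 hkW, hcard] at hlt
    norm_cast at hlt
    omega
  have hne := hC.nonempty hk₀ hk₀W
  by_cases hstar : ∃ a ∈ W, ∀ k ∈ C, a ∈ k
  · obtain ⟨a, haW, haC⟩ := hstar
    refine Or.inl ⟨⟨a, haW, haC⟩, ?_⟩
    rintro ⟨Pl, hPl, -, hCPl⟩
    exact hC.not_forall_subset_plane hind.2 hsize' hne haW haC hPl hCPl
  · obtain ⟨Pl, hPl, hCPl⟩ := hC.1.exists_plane hne hstar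
    obtain ⟨k, hk⟩ := hne
    exact Or.inr ⟨⟨Pl, hPl, fun hW => hC.1.2.1 k hk ((hCPl k hk).trans hW), hCPl⟩, hstar⟩

open ProjSpace in
/-- every maximal clique of the parallelism relation is of exactly one of
two disjoint types: a star direction or a top direction. -/
theorem max_par_clique_dichotomy {S : Type*} (P : ProjSpace S) (W : Set S)
    (lam : ℕ) (hlam : 0 < lam) (hind : P.HasIndex W lam)
    (hsize : ∀ k ∈ P.L, 2 * (lam : ℕ∞) + 2 ≤ k.encard)
    (C : Set (Set S)) (hC : IsMaxParClique P W C) :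
    Xor' (∃ a ∈ W, ∀ k ∈ C, a ∈ k)
         (∃ Pl : Set S, P.IsPlane Pl ∧ ¬ Pl ⊆ W ∧ ∀ k ∈ C, k ⊆ Pl) :=
  max_par_clique_dichotomy_general P W lam hind hsize C hC
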